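/- arXiv:1906.04344 — 2 statements merged into one kernel-verified Lean document; each statement's English description precedes it below -/
import Mathlib

section
/- Let μ be a normal measure on a cardinal κ, h : κ → κ a block function with Kunen function Ξ, and let F₀, F₁ : T^h → κ be order-preserving (where T^h = {(α,β) : β < h(α)} with the lexicographic order). If for every β < ε^Ξ_h the slices satisfy F₀^(β) =_μ F₁^(β), then for μ-almost all α, F₀(α,β) = F₁(α,β) for all β < h(α). -/
/-- `μ` is a normal measure on the cardinal `κ`: a `κ`-complete ultrafilter on
the subsets of (the ordinals below) `κ` such that every function regressive on
a set in `μ` is constant on a set in `μ`. -/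
def IsNormalMeasure (κ : Cardinal) (μ : Set (Set Ordinal)) : Prop :=
  (∀ S ∈ μ, S ⊆ Set.Iio κ.ord) ∧
  Set.Iio κ.ord ∈ μ ∧ (∅ : Set Ordinal) ∉ μ ∧
  (∀ S ∈ μ, ∀ T : Set Ordinal, S ⊆ T → T ⊆ Set.Iio κ.ord → T ∈ μ) ∧
  (∀ S ⊆ Set.Iio κ.ord, S ∈ μ ∨ (Set.Iio κ.ord \ S) ∈ μ) ∧
  (∀ ι < κ.ord, ∀ A : Ordinal → Set Ordinal, (∀ i < ι, A i ∈ μ) →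
    (Set.Iio κ.ord ∩ ⋂ i ∈ Set.Iio ι, A i) ∈ μ) ∧
  (∀ F : Ordinal → Ordinal, ∀ S ∈ μ, (∀ α ∈ S, F α < α) →
    ∃ ξ : Ordinal, {α ∈ S | F α = ξ} ∈ μ)

/-- `δ^Ξ_α = sup{Ξ(α,β) : β < α}`. -/
noncomputable def deltaXi (Ξ : Ordinal → Ordinal → Ordinal) (α : Ordinal) : Ordinal :=
  sSup ((fun β => Ξ α β) '' Set.Iio α)

/-- The column `Ξ^β : κ → κ`, with `Ξ^β(α) = Ξ(α,β)` for `α > β` and `0` otherwise. -/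
noncomputable def XiCol (Ξ : Ordinal → Ordinal → Ordinal) (β : Ordinal) : Ordinal → Ordinal :=
  fun α => if β < α then Ξ α β else 0

/-- `f` is a block function with respect to `μ`: `f(α) < |α|⁺` for `μ`-almost all `α`. -/
def IsBlockFun (κ : Cardinal) (μ : Set (Set Ordinal)) (f : Ordinal → Ordinal) : Prop :=
  {α | α < κ.ord ∧ f α < (Order.succ α.card).ord} ∈ μ

/-- `Ξ` is a Kunen function for `f` with respect to `μ`: for `μ`-almost all `α`,
`f(α) ≤ δ^Ξ_α` and `β ↦ Ξ(α,β)` maps `α` onto `δ^Ξ_α`. -/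
def IsKunenFunctionFor (κ : Cardinal) (μ : Set (Set Ordinal))
    (f : Ordinal → Ordinal) (Ξ : Ordinal → Ordinal → Ordinal) : Prop :=
  {α | α < κ.ord ∧ f α ≤ deltaXi Ξ α ∧ (∀ β < α, Ξ α β < deltaXi Ξ α) ∧
      ∀ γ < deltaXi Ξ α, ∃ β < α, Ξ α β = γ} ∈ μ

/-- `g <_μ h`: `g(α) < h(α)` for `μ`-almost all `α < κ`. -/
def LtMu (κ : Cardinal) (μ : Set (Set Ordinal)) (g h : Ordinal → Ordinal) : Prop :=
  {α | α < κ.ord ∧ g α < h α} ∈ μ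

/-- `F : T^h → κ` is order preserving, where `T^h = {(α,β) : β < h α}` carries
the lexicographic order. -/
def OrderPresOnT (κ : Cardinal) (h : Ordinal → Ordinal)
    (F : Ordinal → Ordinal → Ordinal) : Prop :=
  (∀ α < κ.ord, ∀ β < h α, F α β < κ.ord) ∧
  ∀ α α' β β' : Ordinal, α < κ.ord → α' < κ.ord → β < h α → β' < h α' →
    (α < α' ∨ (α = α' ∧ β < β')) → F α β < F α' β'

/-!
If the conclusion fails, then on a `μ`-large set of `α` there is a point `γ < h(α)` where
`F₀(α, γ) ≠ F₁(α, γ)`. By the Kunen property `γ = Ξ(α, b(α))` for some `b(α) < α`, and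
normality makes `b` constant, say `β`, on a `μ`-large set. There the column `Ξ^β` lies below `h`
and picks out disagreement points, contradicting the hypothesis on the slice along `Ξ^β`.
-/

namespace IsNormalMeasure

variable {κ : Cardinal} {μ : Set (Set Ordinal)}

theorem nonempty_of_mem (hμ : IsNormalMeasure κ μ) {S : Set Ordinal} (hS : S ∈ μ) :
    S.Nonempty :=
  Set.nonempty_iff_ne_empty.2 fun hS_empty => hμ.2.2.1 (hS_empty ▸ hS)

theorem mem_of_subset (hμ : IsNormalMeasure κ μ) {S T : Set Ordinal} (hS : S ∈ μ)
    (hST : S ⊆ T) (hT : T ⊆ Set.Iio κ.ord) : T ∈ μ :=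
  hμ.2.2.2.1 S hS T hST hT

theorem mem_or_diff_mem (hμ : IsNormalMeasure κ μ) {S : Set Ordinal}
    (hS : S ⊆ Set.Iio κ.ord) : S ∈ μ ∨ Set.Iio κ.ord \ S ∈ μ :=
  hμ.2.2.2.2.1 S hS

theorem exists_eq_of_regressive (hμ : IsNormalMeasure κ μ) {F : Ordinal → Ordinal}
    {S : Set Ordinal} (hS : S ∈ μ) (hF : ∀ α ∈ S, F α < α) :
    ∃ ξ : Ordinal, {α ∈ S | F α = ξ} ∈ μ :=
  hμ.2.2.2.2.2.2 F S hS hF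

theorem inter_mem (hμ : IsNormalMeasure κ μ) (hκ : 2 < κ.ord) {S T : Set Ordinal}
    (hS : S ∈ μ) (hT : T ∈ μ) : S ∩ T ∈ μ := by
  let A : Ordinal → Set Ordinal := fun i => if i = 0 then S else T
  have hA : ∀ i < 2, A i ∈ μ := fun i _ => by by_cases hi : i = 0 <;> simp [A, hi, hS, hT]
  refine hμ.mem_of_subset (hμ.2.2.2.2.2.1 2 hκ A hA) ?_
    fun α hα => hμ.1 S hS hα.1
  rintro α ⟨-, hα⟩
  rw [Set.mem_iInter₂] at hα
  simpa [A] using And.intro (hα 0 (by norm_num)) (hα 1 (by norm_num))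

end IsNormalMeasure

/-- `IsKunenFunctionFor κ μ f Ξ` unfolds to `kunenSet κ f Ξ ∈ μ`. -/
def kunenSet (κ : Cardinal) (f : Ordinal → Ordinal) (Ξ : Ordinal → Ordinal → Ordinal) :
    Set Ordinal :=
  {α | α < κ.ord ∧ f α ≤ deltaXi Ξ α ∧ (∀ β < α, Ξ α β < deltaXi Ξ α) ∧
      ∀ γ < deltaXi Ξ α, ∃ β < α, Ξ α β = γ}

section kunenSet

variable {κ : Cardinal} {f : Ordinal → Ordinal} {Ξ : Ordinal → Ordinal → Ordinal}
  {α : Ordinal}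

theorem exists_lt_eq_of_mem_kunenSet (hα : α ∈ kunenSet κ f Ξ) {γ : Ordinal}
    (hγ : γ < f α) : ∃ β < α, Ξ α β = γ :=
  hα.2.2.2 γ (hγ.trans_le hα.2.1)

theorem eq_zero_of_mem_kunenSet_of_lt_two (hα : α ∈ kunenSet κ f Ξ) (hα₂ : α < 2) :
    f α = 0 := by
  obtain ⟨-, hfδ, hΞδ, -⟩ := hα
  obtain rfl | rfl := Order.le_one_iff.1 (Order.lt_two_iff.1 hα₂)
  · simpa [deltaXi] using hfδ
  · have hδ : deltaXi Ξ 1 = Ξ 1 0 := by simp [deltaXi]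
    exact absurd (hΞδ 0 zero_lt_one) (hδ ▸ lt_irrefl _)

end kunenSet

namespace IsKunenFunctionFor

variable {κ : Cardinal} {μ : Set (Set Ordinal)} {h : Ordinal → Ordinal}
  {Ξ : Ordinal → Ordinal → Ordinal}

/-- Every choice of points below `h` is represented `μ`-a.e. by a single column of `Ξ`. -/
theorem exists_xiCol (hΞ : IsKunenFunctionFor κ μ h Ξ) (hμ : IsNormalMeasure κ μ)
    (hκ : 2 < κ.ord) {P : Ordinal → Ordinal → Prop} {S : Set Ordinal} (hS : S ∈ μ)
    (hP : ∀ α ∈ S, ∃ γ < h α, P α γ) :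
    ∃ β < κ.ord, LtMu κ μ (XiCol Ξ β) h ∧ {α | α < κ.ord ∧ P α (XiCol Ξ β α)} ∈ μ := by
  set W := S ∩ kunenSet κ h Ξ
  have hW : W ∈ μ := hμ.inter_mem hκ hS hΞ
  have hchoice : ∀ α, ∃ β, α ∈ W → β < α ∧ Ξ α β < h α ∧ P α (Ξ α β) := fun α => by
    by_cases hα : α ∈ W
    · obtain ⟨γ, hγh, hγP⟩ := hP α hα.1
      obtain ⟨β, hβα, rfl⟩ := exists_lt_eq_of_mem_kunenSet hα.2 hγh
      exact ⟨β, fun _ => ⟨hβα, hγh, hγP⟩⟩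
    · exact ⟨0, fun hα' => absurd hα' hα⟩
  choose b hb using hchoice
  obtain ⟨β, hD⟩ := hμ.exists_eq_of_regressive hW fun α hα => (hb α hα).1
  have hcol : ∀ α ∈ {α ∈ W | b α = β},
      α < κ.ord ∧ XiCol Ξ β α < h α ∧ P α (XiCol Ξ β α) := by
    rintro α ⟨hαW, rfl⟩
    obtain ⟨hbα, hbh, hbP⟩ := hb α hαW
    simp only [XiCol, if_pos hbα]
    exact ⟨hαW.2.1, hbh, hbP⟩
  obtain ⟨α₀, hα₀W, rfl⟩ := hμ.nonempty_of_mem hD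
  refine ⟨b α₀, (hb α₀ hα₀W).1.trans hα₀W.2.1, ?_, ?_⟩
  · exact hμ.mem_of_subset hD (fun α hα => ⟨(hcol α hα).1, (hcol α hα).2.1⟩) fun α hα => hα.1
  · exact hμ.mem_of_subset hD (fun α hα => ⟨(hcol α hα).1, (hcol α hα).2.2⟩) fun α hα => hα.1

end IsKunenFunctionFor

theorem slices_agree_implies_agree_general (κ : Cardinal) (μ : Set (Set Ordinal))
    (hμ : IsNormalMeasure κ μ) (h : Ordinal → Ordinal)
    (Ξ : Ordinal → Ordinal → Ordinal)
    (hΞ : IsKunenFunctionFor κ μ h Ξ)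
    (F₀ F₁ : Ordinal → Ordinal → Ordinal)
    (hslices : ∀ β < κ.ord, LtMu κ μ (XiCol Ξ β) h →
      {α | α < κ.ord ∧ F₀ α (XiCol Ξ β α) = F₁ α (XiCol Ξ β α)} ∈ μ) :
    {α | α < κ.ord ∧ ∀ β < h α, F₀ α β = F₁ α β} ∈ μ := by
  set A := {α | α < κ.ord ∧ ∀ β < h α, F₀ α β = F₁ α β}
  have hA : A ⊆ Set.Iio κ.ord := fun α hα => hα.1
  rcases le_or_gt κ.ord 2 with hκ | hκ
  -- for `κ.ord ≤ 2` the measure need not be closed under `∩`, but `h` vanishes on the Kunen set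
  · refine hμ.mem_of_subset hΞ (fun α hα => ⟨hα.1, ?_⟩) hA
    simp [eq_zero_of_mem_kunenSet_of_lt_two hα (hα.1.trans_le hκ)]
  refine (hμ.mem_or_diff_mem hA).resolve_right fun hC => ?_
  have hdisagree : ∀ α ∈ Set.Iio κ.ord \ A, ∃ γ < h α, F₀ α γ ≠ F₁ α γ := by
    rintro α ⟨hακ, hαA⟩
    by_contra! hagree
    exact hαA ⟨hακ, hagree⟩
  obtain ⟨β, hβ, hlt, hne⟩ := hΞ.exists_xiCol hμ hκ hC hdisagree
  obtain ⟨α, hα_ne, -, hα_eq⟩ :=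
    hμ.nonempty_of_mem (hμ.inter_mem hκ hne (hslices β hβ hlt))
  exact hα_ne.2 hα_eq

/-- if the corresponding slices of two order-preserving maps
`F₀, F₁ : T^h → κ` agree `μ`-a.e. (for every column `Ξ^β` representing a class
below `[h]_μ`, `F₀(·, Ξ^β(·)) =_μ F₁(·, Ξ^β(·))`), then for `μ`-almost all
`α`, `F₀(α,β) = F₁(α,β)` for all `β < h(α)`. -/
theorem slices_agree_implies_agree (κ : Cardinal) (μ : Set (Set Ordinal))
    (hμ : IsNormalMeasure κ μ) (h : Ordinal → Ordinal)
    (hblock : IsBlockFun κ μ h) (Ξ : Ordinal → Ordinal → Ordinal)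
    (hΞ : IsKunenFunctionFor κ μ h Ξ)
    (F₀ F₁ : Ordinal → Ordinal → Ordinal)
    (hF₀ : OrderPresOnT κ h F₀) (hF₁ : OrderPresOnT κ h F₁)
    (hslices : ∀ β < κ.ord, LtMu κ μ (XiCol Ξ β) h →
      {α | α < κ.ord ∧ F₀ α (XiCol Ξ β α) = F₁ α (XiCol Ξ β α)} ∈ μ) :
    {α | α < κ.ord ∧ ∀ β < h α, F₀ α β = F₁ α β} ∈ μ :=
  slices_agree_implies_agree_general κ μ hμ h Ξ hΞ F₀ F₁ hslices
end

section
/- Assume AD (the Axiom of Determinacy) and countable choice for reals. The Martin (Turing-cone) filter μ_D on the set D of Turing degrees — consisting of all sets of degrees containing a cone {Y : X ≤_T Y} — is a countably complete ultrafilter. -/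
/-- Relative partial recursiveness in an oracle `g` (Kleene schemata). -/
inductive RecursiveInOld (g : ℕ →. ℕ) : (ℕ →. ℕ) → Prop
  | zero : RecursiveInOld g (pure 0)
  | succ : RecursiveInOld g ↑Nat.succ
  | left : RecursiveInOld g ↑fun n : ℕ => n.unpair.1
  | right : RecursiveInOld g ↑fun n : ℕ => n.unpair.2
  | oracle : RecursiveInOld g g
  | pair {f h : ℕ →. ℕ} : RecursiveInOld g f → RecursiveInOld g h →
      RecursiveInOld g fun n => Nat.pair <$> f n <*> h n
  | comp {f h : ℕ →. ℕ} : RecursiveInOld g f → RecursiveInOld g h →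
      RecursiveInOld g fun n => h n >>= f
  | prec {f h : ℕ →. ℕ} : RecursiveInOld g f → RecursiveInOld g h →
      RecursiveInOld g (Nat.unpaired fun a n =>
        n.rec (f a) fun y IH => do let i ← IH; h (Nat.pair a (Nat.pair y i)))
  | rfind {f : ℕ →. ℕ} : RecursiveInOld g f →
      RecursiveInOld g fun a => Nat.rfind fun n => (fun m => m = 0) <$> f (Nat.pair a n)

/-- Turing reducibility on reals (elements of `ℕ → ℕ`). -/
def TuringLE (x y : ℕ → ℕ) : Prop := RecursiveInOld ↑y ↑x

/-- Turing equivalence. -/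
def TuringEquiv (x y : ℕ → ℕ) : Prop := TuringLE x y ∧ TuringLE y x

/-- The Turing degrees: reals modulo Turing equivalence. -/
def TDegree : Type := Quot TuringEquiv

/-- The ordering of Turing degrees. -/
def degLE (X Y : TDegree) : Prop :=
  ∃ x y : ℕ → ℕ, Quot.mk TuringEquiv x = X ∧ Quot.mk TuringEquiv y = Y ∧ TuringLE x y

/-- The cone of degrees above `X`. -/
def coneAbove (X : TDegree) : Set TDegree := {Y | degLE X Y}

/-- The Martin (cone) filter on the Turing degrees. -/
def martinFilter : Set (Set TDegree) := {K | ∃ X : TDegree, coneAbove X ⊆ K}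

/-- The position after `n` moves when player I uses `σ` and player II uses `τ`. -/
def gameRun (σ τ : List ℕ → ℕ) : ℕ → List ℕ
  | 0 => []
  | n + 1 => gameRun σ τ n ++
      [if n % 2 = 0 then σ (gameRun σ τ n) else τ (gameRun σ τ n)]

/-- The infinite play produced when player I uses `σ` and player II uses `τ`. -/
def gamePlay (σ τ : List ℕ → ℕ) (n : ℕ) : ℕ :=
  if n % 2 = 0 then σ (gameRun σ τ n) else τ (gameRun σ τ n)

/-- The Axiom of Determinacy: every game on `ω` is determined. -/
def AD : Prop := ∀ A : Set (ℕ → ℕ),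
  (∃ σ, ∀ τ, gamePlay σ τ ∈ A) ∨ (∃ τ, ∀ σ, gamePlay σ τ ∉ A)

/-!
Martin's argument. Given `K`, play the game whose payoff is the set of reals with degree in `K`.
If `σ` is a winning strategy (for either player) and `y ≥_T σ`, let the opponent copy `y`
move by move: the resulting play is computable from `σ ⊕ y ≡_T y` and computes `y`, so it has
the degree of `y`. Hence the cone above the degree of `σ` lies in `K` or in its complement.
For countable completeness, the cone above the join of countably many base reals (chosen
by countable choice) lies in every cone.
-/

namespace RecursiveInOld

variable {g : ℕ →. ℕ}

theorem of_eq {f f' : ℕ →. ℕ} (hf : RecursiveInOld g f) (H : ∀ n, f n = f' n) :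
    RecursiveInOld g f' :=
  funext H ▸ hf

theorem trans {f h : ℕ →. ℕ} (hf : RecursiveInOld g f) (hg : RecursiveInOld h g) :
    RecursiveInOld h f := by
  induction hf with
  | zero => exact .zero
  | succ => exact .succ
  | left => exact .left
  | right => exact .right
  | oracle => exact hg
  | pair _ _ ihf ihh => exact .pair ihf ihh
  | comp _ _ ihf ihh => exact .comp ihf ihh
  | prec _ _ ihf ihh => exact .prec ihf ihh
  | rfind _ ihf => exact .rfind ihf

theorem of_partrec {f : ℕ →. ℕ} (hf : Nat.Partrec f) : RecursiveInOld g f := by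
  induction hf with
  | zero => exact .zero
  | succ => exact .succ
  | left => exact .left
  | right => exact .right
  | pair _ _ ihf ihh => exact .pair ihf ihh
  | comp _ _ ihf ihh => exact .comp ihf ihh
  | prec _ _ ihf ihh => exact .prec ihf ihh
  | rfind _ ihf => exact .rfind ihf

theorem of_primrec {f : ℕ → ℕ} (hf : Primrec f) : RecursiveInOld g f :=
  of_partrec (Nat.Partrec.of_primrec (Primrec.nat_iff.mp hf))

theorem comp_total {f h : ℕ → ℕ} (hf : RecursiveInOld g f) (hh : RecursiveInOld g h) :
    RecursiveInOld g ↑(fun n => f (h n)) :=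
  (hf.comp hh).of_eq fun _ => Part.bind_some _ _

theorem pair_total {f h : ℕ → ℕ} (hf : RecursiveInOld g f) (hh : RecursiveInOld g h) :
    RecursiveInOld g ↑(fun n => Nat.pair (f n) (h n)) :=
  (hf.pair hh).of_eq fun n => by simp [PFun.coe_val, Seq.seq]

theorem comp₂_total {F : ℕ → ℕ → ℕ} (hF : Primrec₂ F) {f h : ℕ → ℕ}
    (hf : RecursiveInOld g f) (hh : RecursiveInOld g h) :
    RecursiveInOld g ↑(fun n => F (f n) (h n)) :=
  ((of_primrec (Primrec₂.unpaired.mpr hF)).comp_total (hf.pair_total hh)).of_eq fun n => by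
    simp

theorem ite_total {p : ℕ → Prop} [DecidablePred p] (hp : PrimrecPred p) {f h : ℕ → ℕ}
    (hf : RecursiveInOld g f) (hh : RecursiveInOld g h) :
    RecursiveInOld g ↑(fun n => if p n then f n else h n) := by
  have hF : Primrec₂ fun n m : ℕ => if p n then m.unpair.1 else m.unpair.2 :=
    Primrec.ite (hp.comp Primrec.fst) (Primrec.fst.comp (Primrec.unpair.comp Primrec.snd))
      (Primrec.snd.comp (Primrec.unpair.comp Primrec.snd))
  exact (comp₂_total hF (of_primrec Primrec.id) (hf.pair_total hh)).of_eq fun n => by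
    by_cases hpn : p n <;> simp [hpn]

theorem nat_rec_total (a : ℕ) {s : ℕ → ℕ → ℕ} (hs : RecursiveInOld g ↑(Nat.unpaired s)) :
    RecursiveInOld g ↑(fun n => (Nat.rec a s n : ℕ)) := by
  have hstep : RecursiveInOld g ↑(fun m : ℕ => Nat.unpaired s m.unpair.2) :=
    hs.comp_total (of_primrec (Primrec.snd.comp Primrec.unpair))
  have hprec : RecursiveInOld g ↑(fun m : ℕ => (Nat.rec a s m.unpair.2 : ℕ)) :=
    ((of_primrec (Primrec.const a)).prec hstep).of_eq fun m => by
      simp only [Nat.unpaired, PFun.coe_val]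
      induction m.unpair.2 with
      | zero => rfl
      | succ k ih => simp only [Nat.unpair_pair] at ih ⊢; rw [ih]; simp
  exact (hprec.comp_total (of_primrec (Primrec₂.natPair.comp (Primrec.const 0) Primrec.id)))
    |>.of_eq fun n => by simp

end RecursiveInOld

namespace TuringLE

theorem refl (x : ℕ → ℕ) : TuringLE x x := .oracle

theorem trans {x y z : ℕ → ℕ} (hxy : TuringLE x y) (hyz : TuringLE y z) : TuringLE x z :=
  RecursiveInOld.trans hxy hyz

theorem of_eq_comp {x y h : ℕ → ℕ} (hh : Primrec h) (H : ∀ n, x n = y (h n)) :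
    TuringLE x y :=
  (RecursiveInOld.comp_total .oracle (RecursiveInOld.of_primrec hh)).of_eq fun n => by
    simp [H]

end TuringLE

theorem turingEquiv_equivalence : Equivalence TuringEquiv :=
  ⟨fun x => ⟨.refl x, .refl x⟩, fun h => ⟨h.2, h.1⟩,
    fun h₁ h₂ => ⟨h₁.1.trans h₂.1, h₂.2.trans h₁.2⟩⟩

theorem turingLE_unpaired (f : ℕ → ℕ → ℕ) (n : ℕ) : TuringLE (f n) (Nat.unpaired f) :=
  .of_eq_comp (Primrec₂.natPair.comp (Primrec.const n) Primrec.id) fun k => by simp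

theorem mk_eq_mk_iff_turingEquiv {x y : ℕ → ℕ} :
    Quot.mk TuringEquiv x = Quot.mk TuringEquiv y ↔ TuringEquiv x y :=
  ⟨fun h => turingEquiv_equivalence.eqvGen_iff.mp (Quot.eqvGen_exact h), Quot.sound⟩

theorem mem_martinFilter_iff {K : Set TDegree} :
    K ∈ martinFilter ↔ ∃ x, ∀ y, TuringLE x y → Quot.mk TuringEquiv y ∈ K := by
  constructor
  · rintro ⟨X, hX⟩
    obtain ⟨x, rfl⟩ := Quot.exists_rep X
    exact ⟨x, fun y hxy => hX ⟨x, y, rfl, rfl, hxy⟩⟩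
  · rintro ⟨x, hx⟩
    refine ⟨Quot.mk _ x, ?_⟩
    rintro _ ⟨x', y, hx', rfl, hx'y⟩
    exact hx y ((mk_eq_mk_iff_turingEquiv.mp hx').2.trans hx'y)

section Games

open Encodable

def strategyReal (s : List ℕ → ℕ) (n : ℕ) : ℕ := s ((decode n).getD [])

def appendEncoded (e v : ℕ) : ℕ := encode ((decode (α := List ℕ) e).getD [] ++ [v])

theorem primrec₂_appendEncoded : Primrec₂ appendEncoded :=
  Primrec.encode.comp <| Primrec.list_append.comp
    (Primrec.option_getD.comp (Primrec.decode.comp Primrec.fst) (Primrec.const []))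
    (Primrec.list_cons.comp Primrec.snd (Primrec.const []))

def encodedMove (σ τ : List ℕ → ℕ) (k e : ℕ) : ℕ :=
  if k % 2 = 0 then strategyReal σ e else strategyReal τ e

/-- `encode (gameRun σ τ n)`, written as a recursion on `n` so that it is visibly computable
from the two strategies. -/
def encodedRun (σ τ : List ℕ → ℕ) (n : ℕ) : ℕ :=
  Nat.rec (encode ([] : List ℕ)) (fun k e => appendEncoded e (encodedMove σ τ k e)) n

theorem encodedRun_eq_encode_gameRun (σ τ : List ℕ → ℕ) (n : ℕ) :
    encodedRun σ τ n = encode (gameRun σ τ n) := by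
  induction n with
  | zero => rfl
  | succ n ih =>
    simp only [encodedRun] at ih ⊢
    rw [ih]
    by_cases hn : n % 2 = 0 <;> simp [gameRun, appendEncoded, encodedMove, strategyReal, hn]

theorem gamePlay_eq_encodedMove (σ τ : List ℕ → ℕ) (n : ℕ) :
    gamePlay σ τ n = encodedMove σ τ n (encodedRun σ τ n) := by
  by_cases hn : n % 2 = 0 <;>
    simp [gamePlay, encodedMove, strategyReal, encodedRun_eq_encode_gameRun, hn]

variable {g : ℕ →. ℕ} {σ τ : List ℕ → ℕ}

theorem recursiveInOld_encodedMove (hσ : RecursiveInOld g ↑(strategyReal σ))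
    (hτ : RecursiveInOld g ↑(strategyReal τ)) {k e : ℕ → ℕ} (hk : Primrec k)
    (he : RecursiveInOld g ↑e) : RecursiveInOld g ↑(fun n => encodedMove σ τ (k n) (e n)) :=
  RecursiveInOld.ite_total (Primrec.eq.comp (Primrec.nat_mod.comp hk (Primrec.const 2))
    (Primrec.const 0)) (hσ.comp_total he) (hτ.comp_total he)

theorem recursiveInOld_encodedRun (hσ : RecursiveInOld g ↑(strategyReal σ))
    (hτ : RecursiveInOld g ↑(strategyReal τ)) : RecursiveInOld g ↑(encodedRun σ τ) := by
  have hsnd : RecursiveInOld g ↑(fun m : ℕ => m.unpair.2) :=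
    .of_primrec (Primrec.snd.comp Primrec.unpair)
  exact RecursiveInOld.nat_rec_total _ <| RecursiveInOld.comp₂_total primrec₂_appendEncoded hsnd
    (recursiveInOld_encodedMove hσ hτ (Primrec.fst.comp Primrec.unpair) hsnd)

theorem turingLE_gamePlay {z : ℕ → ℕ} (hσ : TuringLE (strategyReal σ) z)
    (hτ : TuringLE (strategyReal τ) z) : TuringLE (gamePlay σ τ) z :=
  (recursiveInOld_encodedMove hσ hτ Primrec.id (recursiveInOld_encodedRun hσ hτ)).of_eq
    fun n => by simp [gamePlay_eq_encodedMove]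

def copyStrategy (y : ℕ → ℕ) (l : List ℕ) : ℕ := y (l.length / 2)

theorem strategyReal_copyStrategy_turingLE (y : ℕ → ℕ) :
    TuringLE (strategyReal (copyStrategy y)) y :=
  .of_eq_comp (Primrec.nat_div.comp (Primrec.list_length.comp
    (Primrec.option_getD.comp Primrec.decode (Primrec.const []))) (Primrec.const 2))
    fun _ => rfl

theorem length_gameRun (σ τ : List ℕ → ℕ) (n : ℕ) : (gameRun σ τ n).length = n := by
  induction n with
  | zero => rfl
  | succ n ih => simp [gameRun, ih]

theorem gamePlay_copyStrategy_odd (σ : List ℕ → ℕ) (y : ℕ → ℕ) (k : ℕ) :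
    gamePlay σ (copyStrategy y) (2 * k + 1) = y k := by
  simp [gamePlay, copyStrategy, length_gameRun, Nat.add_div]

theorem gamePlay_copyStrategy_even (τ : List ℕ → ℕ) (y : ℕ → ℕ) (k : ℕ) :
    gamePlay (copyStrategy y) τ (2 * k) = y k := by
  simp [gamePlay, copyStrategy, length_gameRun]

theorem turingEquiv_gamePlay_copyStrategy_right {y : ℕ → ℕ}
    (hσ : TuringLE (strategyReal σ) y) :
    TuringEquiv (gamePlay σ (copyStrategy y)) y :=
  ⟨turingLE_gamePlay hσ (strategyReal_copyStrategy_turingLE y),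
    .of_eq_comp (Primrec.succ.comp (Primrec.nat_mul.comp (Primrec.const 2) Primrec.id))
      fun k => (gamePlay_copyStrategy_odd σ y k).symm⟩

theorem turingEquiv_gamePlay_copyStrategy_left {y : ℕ → ℕ}
    (hτ : TuringLE (strategyReal τ) y) :
    TuringEquiv (gamePlay (copyStrategy y) τ) y :=
  ⟨turingLE_gamePlay (strategyReal_copyStrategy_turingLE y) hτ,
    .of_eq_comp (Primrec.nat_mul.comp (Primrec.const 2) Primrec.id)
      fun k => (gamePlay_copyStrategy_even τ y k).symm⟩

end Games

theorem mem_martinFilter_or_compl_mem (hAD : AD) (K : Set TDegree) :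
    K ∈ martinFilter ∨ Kᶜ ∈ martinFilter := by
  simp only [mem_martinFilter_iff]
  rcases hAD {x | Quot.mk TuringEquiv x ∈ K} with ⟨σ, hσ⟩ | ⟨τ, hτ⟩
  · refine .inl ⟨strategyReal σ, fun y hy => ?_⟩
    rw [← Quot.sound (turingEquiv_gamePlay_copyStrategy_right hy)]
    exact hσ _
  · refine .inr ⟨strategyReal τ, fun y hy => ?_⟩
    rw [← Quot.sound (turingEquiv_gamePlay_copyStrategy_left hy)]
    exact hτ _

theorem empty_notMem_martinFilter : (∅ : Set TDegree) ∉ martinFilter := fun h =>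
  let ⟨x, hx⟩ := mem_martinFilter_iff.mp h
  hx x (.refl x)

theorem iInter_mem_martinFilter
    (hAC : ∀ A : ℕ → Set (ℕ → ℕ), (∀ n, (A n).Nonempty) →
      ∃ f : ℕ → ℕ → ℕ, ∀ n, f n ∈ A n)
    {K : ℕ → Set TDegree} (hK : ∀ n, K n ∈ martinFilter) : (⋂ n, K n) ∈ martinFilter := by
  simp only [mem_martinFilter_iff] at hK ⊢
  obtain ⟨x, hx⟩ := hAC _ hK
  exact ⟨Nat.unpaired x, fun y hy => Set.mem_iInter.mpr fun n =>
    hx n y ((turingLE_unpaired x n).trans hy)⟩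

/-- Martin: assuming AD and countable choice for reals, the
Martin cone filter on the Turing degrees is a countably complete ultrafilter. -/
theorem martin_measure_countably_complete_ultrafilter
    (hAD : AD)
    (hACωℝ : ∀ A : ℕ → Set (ℕ → ℕ), (∀ n, (A n).Nonempty) →
      ∃ f : ℕ → ℕ → ℕ, ∀ n, f n ∈ A n) :
    (∀ K : Set TDegree, K ∈ martinFilter ∨ Kᶜ ∈ martinFilter) ∧
    (∅ : Set TDegree) ∉ martinFilter ∧
    (∀ K : ℕ → Set TDegree, (∀ n, K n ∈ martinFilter) →
      (⋂ n, K n) ∈ martinFilter) :=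
  ⟨mem_martinFilter_or_compl_mem hAD, empty_notMem_martinFilter,
    fun _ => iInter_mem_martinFilter hACωℝ⟩
end
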